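/- arXiv:0712.0127 — 7 statements merged into one kernel-verified Lean document; each statement's English description precedes it below -/
import Mathlib

section
/- Let R be a commutative ring. Then every R-module is Gorenstein projective if and only if every R-module is Gorenstein injective. -/
open CategoryTheory

universe u

/-- `Extⁿ_R(M, N) = 0`, using Mathlib's `Ext` functor on `ModuleCat R`. -/
def extVanishes (R : Type u) [CommRing R] (n : ℕ) (M N : Type u) [AddCommGroup M] [Module R M]
    [AddCommGroup N] [Module R N] : Prop :=
  Subsingleton (((Ext R (ModuleCat.{u} R) n).obj (Opposite.op (ModuleCat.of R M))).obj
    (ModuleCat.of R N))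

/-- An `R`-module `M` is strongly Gorenstein projective if there is a short exact sequence
`0 → M → P → M → 0` with `P` projective, and `Ext¹_R(M, Q) = 0` for every projective `Q`. -/
def IsStronglyGorensteinProjective (R : Type u) [CommRing R] (M : Type u) [AddCommGroup M]
    [Module R M] : Prop :=
  (∃ (P : ModuleCat.{u} R) (f : M →ₗ[R] P) (g : P →ₗ[R] M),
      Module.Projective R P ∧ Function.Injective f ∧ Function.Surjective g ∧
      LinearMap.range f = LinearMap.ker g) ∧
  ∀ Q : ModuleCat.{u} R, Module.Projective R Q → extVanishes R 1 M Q

/-- An `R`-module is Gorenstein projective if it is a direct summand of a strongly Gorenstein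
projective module. -/
def IsGorensteinProjective (R : Type u) [CommRing R] (M : Type u) [AddCommGroup M]
    [Module R M] : Prop :=
  ∃ (N : ModuleCat.{u} R) (i : M →ₗ[R] N) (r : N →ₗ[R] M),
    IsStronglyGorensteinProjective R N ∧ r ∘ₗ i = LinearMap.id

/-- An `R`-module `M` is strongly Gorenstein injective if there is a short exact sequence
`0 → M → E → M → 0` with `E` injective, and `Ext¹_R(Q, M) = 0` for every injective `Q`. -/
def IsStronglyGorensteinInjective (R : Type u) [CommRing R] (M : Type u) [AddCommGroup M]
    [Module R M] : Prop :=
  (∃ (E : ModuleCat.{u} R) (f : M →ₗ[R] E) (g : E →ₗ[R] M),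
      Module.Injective R E ∧ Function.Injective f ∧ Function.Surjective g ∧
      LinearMap.range f = LinearMap.ker g) ∧
  ∀ Q : ModuleCat.{u} R, Module.Injective R Q → extVanishes R 1 Q M

/-- An `R`-module is Gorenstein injective if it is a direct summand of a strongly Gorenstein
injective module. -/
def IsGorensteinInjective (R : Type u) [CommRing R] (M : Type u) [AddCommGroup M]
    [Module R M] : Prop :=
  ∃ (N : ModuleCat.{u} R) (i : M →ₗ[R] N) (r : N →ₗ[R] M),
    IsStronglyGorensteinInjective R N ∧ r ∘ₗ i = LinearMap.id

/-- A ring is G-semisimple if every module over it is Gorenstein projective. -/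
def GSemisimple (R : Type u) [CommRing R] : Prop :=
  ∀ M : ModuleCat.{u} R, IsGorensteinProjective R M

/-- A ring is SG-semisimple if every module over it is strongly Gorenstein projective. -/
def SGSemisimple (R : Type u) [CommRing R] : Prop :=
  ∀ M : ModuleCat.{u} R, IsStronglyGorensteinProjective R M

/-!
If every module is Gorenstein projective, then `Ext¹(-, P) = 0` for every projective `P`, so
projectives are injective; an injective module is a summand of a strongly Gorenstein projective
module, hence embeds, necessarily as a summand, in a projective one, so injectives are
projective. Dually, if every module is Gorenstein injective, projective and injective modules
coincide. Once they coincide, `Ext¹(M, Q)` vanishes for `Q` projective (= injective) and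
`Ext¹(Q, M)` vanishes for `Q` injective (= projective), so the two notions of strongly
Gorenstein module, and hence of Gorenstein module, agree.
-/

open CategoryTheory.Limits

section Retract

variable {R : Type u} [Ring R]

def ModuleCat.retractOfLeftInverse {M N : Type u} [AddCommGroup M] [Module R M]
    [AddCommGroup N] [Module R N] (i : M →ₗ[R] N) (r : N →ₗ[R] M)
    (h : r ∘ₗ i = LinearMap.id) : Retract (ModuleCat.of R M) (ModuleCat.of R N) where
  i := ModuleCat.ofHom i
  r := ModuleCat.ofHom r
  retract := by ext x; exact LinearMap.congr_fun h x

lemma Module.Injective.of_retract {M N : Type u} [AddCommGroup M] [Module R M]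
    [AddCommGroup N] [Module R N] [Module.Injective R N] (i : M →ₗ[R] N) (r : N →ₗ[R] M)
    (h : r ∘ₗ i = LinearMap.id) : Module.Injective R M := by
  have := (Module.injective_iff_injective_object R N).1 ‹_›
  exact (Module.injective_iff_injective_object R M).2
    (ModuleCat.retractOfLeftInverse i r h).injective

end Retract

section Ext

variable {R : Type u} [CommRing R]

lemma extVanishes_iff_isZero (n : ℕ) (X Y : ModuleCat.{u} R) :
    extVanishes R n X Y ↔ IsZero (((Ext R (ModuleCat.{u} R) n).obj (Opposite.op X)).obj Y) :=
  ModuleCat.isZero_iff_subsingleton.symm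

lemma extVanishes_of_retract_left {n : ℕ} {X X' Y : ModuleCat.{u} R} (h : Retract X X')
    (hX' : extVanishes R n X' Y) : extVanishes R n X Y := by
  rw [extVanishes_iff_isZero] at hX' ⊢
  exact hX'.of_mono (h.op.map ((Ext R (ModuleCat.{u} R) n).flip.obj Y)).i

lemma extVanishes_of_retract_right {n : ℕ} {X Y Y' : ModuleCat.{u} R} (h : Retract Y Y')
    (hY' : extVanishes R n X Y') : extVanishes R n X Y := by
  rw [extVanishes_iff_isZero] at hY' ⊢
  exact hY'.of_mono (h.map ((Ext R (ModuleCat.{u} R) n).obj (Opposite.op X))).i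

lemma extVanishes_succ_of_projective (n : ℕ) (X Y : ModuleCat.{u} R) [Projective X] :
    extVanishes R (n + 1) X Y :=
  (extVanishes_iff_isZero _ X Y).2 (isZero_Ext_succ_of_projective X Y n)

lemma CategoryTheory.ProjectiveResolution.extVanishes_one_iff {X : ModuleCat.{u} R}
    (P : ProjectiveResolution X) (Y : ModuleCat.{u} R) :
    extVanishes R 1 X Y ↔ ∀ φ : P.complex.X 1 ⟶ Y, P.complex.d 2 1 ≫ φ = 0 →
      ∃ ψ : P.complex.X 0 ⟶ Y, P.complex.d 1 0 ≫ ψ = φ := by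
  let K := P.complex.linearYonedaObj R Y
  rw [extVanishes_iff_isZero, (P.isoExt 1 Y).isZero_iff, ← K.exactAt_iff_isZero_homology,
    K.exactAt_iff' 0 1 2 (by simp) (by simp), ShortComplex.moduleCat_exact_iff]
  rfl

lemma extVanishes_one_of_injective (X Y : ModuleCat.{u} R) [Injective Y] :
    extVanishes R 1 X Y := by
  let P : ProjectiveResolution X := (HasProjectiveResolution.out (Z := X)).some
  rw [P.extVanishes_one_iff]
  intro φ hφ
  let d₁ : cokernel (P.complex.d 2 1) ⟶ P.complex.X 0 :=
    cokernel.desc _ _ (P.complex.d_comp_d 2 1 0)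
  have : Mono d₁ := (P.exact_succ 0).mono_cokernelDesc
  refine ⟨Injective.factorThru (cokernel.desc _ φ hφ) d₁, ?_⟩
  rw [← cokernel.π_desc _ _ (P.complex.d_comp_d 2 1 0), Category.assoc, Injective.comp_factorThru,
    cokernel.π_desc]

lemma CategoryTheory.ShortComplex.ShortExact.nonempty_splitting_of_extVanishes
    {S : ShortComplex (ModuleCat.{u} R)} (hS : S.ShortExact) (h : extVanishes R 1 S.X₃ S.X₁) :
    Nonempty S.Splitting := by
  let P : ProjectiveResolution S.X₃ := (HasProjectiveResolution.out (Z := S.X₃)).some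
  have : Mono S.f := hS.mono_f
  have : Epi S.g := hS.epi_g
  let π₀ : P.complex.X 0 ⟶ S.X₃ := P.π.f 0
  have : Epi π₀ := inferInstanceAs (Epi (P.π.f 0))
  have hπ₀ : P.complex.d 1 0 ≫ π₀ = 0 := P.complex_d_comp_π_f_zero
  obtain ⟨σ₀, hσ₀⟩ : ∃ σ₀, σ₀ ≫ S.g = π₀ := ⟨_, Projective.factorThru_comp π₀ S.g⟩
  obtain ⟨τ, hτ⟩ := hS.exact.lift' (P.complex.d 1 0 ≫ σ₀) (by rw [Category.assoc, hσ₀, hπ₀])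
  have hτ_cocycle : P.complex.d 2 1 ≫ τ = 0 := by
    rw [← cancel_mono S.f, Category.assoc, hτ, ← Category.assoc, P.complex.d_comp_d,
      zero_comp, zero_comp]
  obtain ⟨ψ, hψ⟩ := (P.extVanishes_one_iff S.X₁).1 h τ hτ_cocycle
  -- `σ₀ - ψ ≫ S.f` vanishes on `im d₁ = ker π₀`, so it descends to a section of `S.g`
  obtain ⟨s, hs⟩ : ∃ s : S.X₃ ⟶ S.X₂, π₀ ≫ s = σ₀ - ψ ≫ S.f := P.exact₀.desc' (σ₀ - ψ ≫ S.f)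
    (by rw [Preadditive.comp_sub, ← Category.assoc, hψ, hτ, sub_self])
  refine ⟨ShortComplex.Splitting.ofExactOfSection S hS.exact s ?_ hS.mono_f⟩
  rw [← cancel_epi π₀, ← Category.assoc, hs, Preadditive.sub_comp, Category.assoc, S.zero,
    comp_zero, sub_zero, hσ₀, Category.comp_id]

lemma projective_of_forall_extVanishes_one {X : ModuleCat.{u} R}
    (h : ∀ Y : ModuleCat.{u} R, extVanishes R 1 X Y) : Projective X := by
  let S := ShortComplex.kernelSequence (Projective.π X)
  have hS : S.ShortExact :=
    .mk' (ShortComplex.kernelSequence_exact _) inferInstance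
      (inferInstanceAs (Epi (Projective.π X)))
  obtain ⟨σ⟩ := hS.nonempty_splitting_of_extVanishes (h S.X₁)
  exact (show Retract X (Projective.over X) from ⟨σ.s, S.g, σ.s_g⟩).projective

lemma injective_of_forall_extVanishes_one {Y : ModuleCat.{u} R}
    (h : ∀ X : ModuleCat.{u} R, extVanishes R 1 X Y) : Injective Y := by
  let S := ShortComplex.cokernelSequence (Injective.ι Y)
  have hS : S.ShortExact :=
    .mk' (ShortComplex.cokernelSequence_exact _) (inferInstanceAs (Mono (Injective.ι Y)))
      inferInstance
  obtain ⟨σ⟩ := hS.nonempty_splitting_of_extVanishes (h S.X₃)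
  exact (show Retract Y (Injective.under Y) from ⟨S.f, σ.r, σ.f_r⟩).injective

end Ext

section Gorenstein

variable {R : Type u} [CommRing R] {M : Type u} [AddCommGroup M] [Module R M]

lemma IsGorensteinProjective.extVanishes_one (hM : IsGorensteinProjective R M)
    {Q : ModuleCat.{u} R} (hQ : Module.Projective R Q) : extVanishes R 1 M Q := by
  obtain ⟨N, i, r, ⟨-, hN⟩, hri⟩ := hM
  exact extVanishes_of_retract_left (ModuleCat.retractOfLeftInverse i r hri) (hN Q hQ)

lemma IsGorensteinInjective.extVanishes_one (hM : IsGorensteinInjective R M)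
    {Q : ModuleCat.{u} R} (hQ : Module.Injective R Q) : extVanishes R 1 Q M := by
  obtain ⟨N, i, r, ⟨-, hN⟩, hri⟩ := hM
  exact extVanishes_of_retract_right (Y := ModuleCat.of R M)
    (ModuleCat.retractOfLeftInverse i r hri) (hN Q hQ)

lemma IsGorensteinProjective.exists_injective_to_projective (hM : IsGorensteinProjective R M) :
    ∃ (P : ModuleCat.{u} R) (f : M →ₗ[R] P), Module.Projective R P ∧ Function.Injective f := by
  obtain ⟨N, i, r, ⟨⟨P, f, -, hP, hf, -⟩, -⟩, hri⟩ := hM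
  exact ⟨P, f ∘ₗ i, hP, hf.comp (Function.LeftInverse.injective (LinearMap.congr_fun hri))⟩

lemma IsGorensteinInjective.exists_surjective_from_injective (hM : IsGorensteinInjective R M) :
    ∃ (E : ModuleCat.{u} R) (g : E →ₗ[R] M), Module.Injective R E ∧ Function.Surjective g := by
  obtain ⟨N, i, r, ⟨⟨E, -, g, hE, -, hg, -⟩, -⟩, hri⟩ := hM
  exact ⟨E, r ∘ₗ g, hE, (Function.LeftInverse.surjective (f := r) (LinearMap.congr_fun hri)).comp hg⟩

lemma projective_iff_injective_of_gSemisimple (h : GSemisimple R) (Q : ModuleCat.{u} R) :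
    Module.Projective R Q ↔ Module.Injective R Q := by
  refine ⟨fun hQ ↦ ?_, fun hQ ↦ ?_⟩
  · exact (Module.injective_iff_injective_object R Q).2
      (injective_of_forall_extVanishes_one fun X ↦ (h X).extVanishes_one hQ)
  · obtain ⟨P, f, hP, hf⟩ := (h Q).exists_injective_to_projective
    obtain ⟨t, ht⟩ := Module.Injective.extension_property R Q Q P f hf LinearMap.id
    exact Module.Projective.of_split f t ht

lemma projective_iff_injective_of_forall_isGorensteinInjective
    (h : ∀ M : ModuleCat.{u} R, IsGorensteinInjective R M) (Q : ModuleCat.{u} R) :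
    Module.Projective R Q ↔ Module.Injective R Q := by
  refine ⟨fun hQ ↦ ?_, fun hQ ↦ ?_⟩
  · obtain ⟨E, g, hE, hg⟩ := (h Q).exists_surjective_from_injective
    obtain ⟨s, hs⟩ := Module.projective_lifting_property g LinearMap.id hg
    exact Module.Injective.of_retract s g hs
  · exact (IsProjective.iff_projective Q).2
      (projective_of_forall_extVanishes_one fun Y ↦ (h Y).extVanishes_one hQ)

lemma isStronglyGorensteinProjective_iff_isStronglyGorensteinInjective
    (h : ∀ Q : ModuleCat.{u} R, Module.Projective R Q ↔ Module.Injective R Q) :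
    IsStronglyGorensteinProjective R M ↔ IsStronglyGorensteinInjective R M := by
  refine ⟨fun ⟨⟨P, f, g, hP, hfg⟩, _⟩ ↦ ⟨⟨P, f, g, (h P).1 hP, hfg⟩, fun Q hQ ↦ ?_⟩,
    fun ⟨⟨E, f, g, hE, hfg⟩, _⟩ ↦ ⟨⟨E, f, g, (h E).2 hE, hfg⟩, fun Q hQ ↦ ?_⟩⟩
  · have := (IsProjective.iff_projective Q).1 ((h Q).2 hQ)
    exact extVanishes_succ_of_projective 0 Q (ModuleCat.of R M)
  · have := (Module.injective_iff_injective_object R Q).1 ((h Q).1 hQ)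
    exact extVanishes_one_of_injective (ModuleCat.of R M) Q

lemma isGorensteinProjective_iff_isGorensteinInjective
    (h : ∀ Q : ModuleCat.{u} R, Module.Projective R Q ↔ Module.Injective R Q) :
    IsGorensteinProjective R M ↔ IsGorensteinInjective R M := by
  simp only [IsGorensteinProjective, IsGorensteinInjective,
    isStronglyGorensteinProjective_iff_isStronglyGorensteinInjective h]

end Gorenstein

/-- Every `R`-module is Gorenstein projective iff every `R`-module is Gorenstein injective. -/
theorem allGorensteinProjective_iff_allGorensteinInjective (R : Type u) [CommRing R] :
    (∀ M : ModuleCat.{u} R, IsGorensteinProjective R M) ↔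
    (∀ M : ModuleCat.{u} R, IsGorensteinInjective R M) :=
  ⟨fun h M ↦ (isGorensteinProjective_iff_isGorensteinInjective
      (projective_iff_injective_of_gSemisimple h)).1 (h M),
    fun h M ↦ (isGorensteinProjective_iff_isGorensteinInjective
      (projective_iff_injective_of_forall_isGorensteinInjective h)).2 (h M)⟩
end

section
/- Let R be a commutative ring. If every R-module is Gorenstein projective, then every injective R-module is projective. -/
open CategoryTheory

universe u

theorem Module.Injective.projective_of_injective_linearMap {R : Type*} {M P : Type u} [Ring R]
    [AddCommGroup M] [Module R M] [AddCommGroup P] [Module R P]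
    [Module.Injective R M] [Module.Projective R P] (f : M →ₗ[R] P) (hf : Function.Injective f) :
    Module.Projective R M := by
  obtain ⟨s, hs⟩ := Module.Injective.out f hf LinearMap.id
  exact Module.Projective.of_split f s (LinearMap.ext hs)

theorem IsStronglyGorensteinProjective.exists_injective_linearMap_projective {R : Type u}
    [CommRing R] {M : Type u} [AddCommGroup M] [Module R M]
    (hM : IsStronglyGorensteinProjective R M) :
    ∃ (P : ModuleCat.{u} R) (f : M →ₗ[R] P), Module.Projective R P ∧ Function.Injective f := by
  obtain ⟨⟨P, f, -, hP, hf, -⟩, -⟩ := hM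
  exact ⟨P, f, hP, hf⟩

theorem IsGorensteinProjective.exists_injective_linearMap_projective {R : Type u}
    [CommRing R] {M : Type u} [AddCommGroup M] [Module R M] (hM : IsGorensteinProjective R M) :
    ∃ (P : ModuleCat.{u} R) (f : M →ₗ[R] P), Module.Projective R P ∧ Function.Injective f := by
  obtain ⟨N, i, r, hN, hri⟩ := hM
  obtain ⟨P, f, hP, hf⟩ := hN.exists_injective_linearMap_projective
  exact ⟨P, f ∘ₗ i, hP, hf.comp (LinearMap.injective_of_comp_eq_id i r hri)⟩

/-- If every `R`-module is Gorenstein projective, then every injective `R`-module is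
projective. -/
theorem injective_projective_of_allGorensteinProjective (R : Type u) [CommRing R]
    (h : ∀ M : ModuleCat.{u} R, IsGorensteinProjective R M) :
    ∀ M : ModuleCat.{u} R, Module.Injective R M → Module.Projective R M := by
  intro M _
  obtain ⟨P, f, hP, hf⟩ := (h M).exists_injective_linearMap_projective
  exact Module.Injective.projective_of_injective_linearMap f hf
end

section
/- A G-semisimple commutative ring R is semisimple if and only if it has finite global dimension, i.e., if and only if there exists a natural number n such that Ext^{n+1}_R(M, N) = 0 for all R-modules M and N. -/
/-! A strongly Gorenstein projective module `N`, with `0 → N → P → N → 0` and `P` projective, has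
the periodic projective resolution `⋯ → P → P → P → N` with differentials `P → N → P`. If
`Extⁿ⁺¹(N, N) = 0`, the surjection `P → N`, an `(n + 1)`-cocycle of `Hom(P_•, N)`, is a
coboundary, which splits `N → P`: so `N` is projective. Over a G-semisimple ring of finite global
dimension every module is thus a direct summand of a projective module, hence projective, and a ring
all of whose cyclic modules are projective is semisimple. Conversely over a semisimple ring every
module is projective, so `Ext¹` vanishes. -/

open CategoryTheory

universe u

namespace Submodule

variable {R M : Type*} [Ring R] [AddCommGroup M] [Module R M]

theorem exists_isCompl_of_projective_quotient (N : Submodule R M)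
    [Module.Projective R (M ⧸ N)] : ∃ N' : Submodule R M, IsCompl N N' := by
  obtain ⟨s, hs⟩ := N.mkQ.exists_rightInverse_of_surjective N.range_mkQ
  have hs_inj : Function.Injective s := Function.LeftInverse.injective (LinearMap.congr_fun hs)
  have hidem : IsIdempotentElem (s ∘ₗ N.mkQ) := by
    rw [IsIdempotentElem, Module.End.mul_eq_comp, LinearMap.comp_assoc,
      ← LinearMap.comp_assoc N.mkQ, hs, LinearMap.id_comp]
  have hker : LinearMap.ker (s ∘ₗ N.mkQ) = N := by
    rw [LinearMap.ker_comp, LinearMap.ker_eq_bot.mpr hs_inj, Submodule.comap_bot, N.ker_mkQ]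
  exact ⟨_, hker ▸ (LinearMap.IsIdempotentElem.isCompl hidem).symm⟩

end Submodule

theorem isSemisimpleRing_of_forall_projective_quotient {R : Type*} [Ring R]
    (h : ∀ I : Ideal R, Module.Projective R (R ⧸ I)) : IsSemisimpleRing R :=
  { exists_isCompl := fun I => I.exists_isCompl_of_projective_quotient }

namespace CategoryTheory

open Limits

namespace ShortComplex

variable {C : Type*} [Category C] [HasZeroMorphisms C] {X₀ X₁ X₂ X₃ X₄ : C}

lemma exact_epi_comp_iff (e : X₀ ⟶ X₁) [Epi e] {f : X₁ ⟶ X₂} {g : X₂ ⟶ X₃} (w : f ≫ g = 0) :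
    (mk (e ≫ f) g (by simp [w])).Exact ↔ (mk f g w).Exact :=
  exact_iff_of_epi_of_isIso_of_mono (S₁ := mk (e ≫ f) g _) (S₂ := mk f g w)
    { τ₁ := e, τ₂ := 𝟙 X₂, τ₃ := 𝟙 X₃ }

lemma exact_comp_mono_iff {f : X₁ ⟶ X₂} {g : X₂ ⟶ X₃} (w : f ≫ g = 0) (m : X₃ ⟶ X₄) [Mono m] :
    (mk f (g ≫ m) (by simp [reassoc_of% w])).Exact ↔ (mk f g w).Exact :=
  (exact_iff_of_epi_of_isIso_of_mono (S₁ := mk f g w) (S₂ := mk f (g ≫ m) _)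
    { τ₁ := 𝟙 X₁, τ₂ := 𝟙 X₂, τ₃ := m }).symm

end ShortComplex

variable {C : Type*} [Category* C] [Abelian C] {N P : C} {f : N ⟶ P} {g : P ⟶ N}

variable (f g) in
noncomputable def periodicComplex (w : f ≫ g = 0) : ChainComplex C ℕ :=
  ChainComplex.of (fun _ => P) (fun _ => g ≫ f) fun _ => by simp [reassoc_of% w]

lemma periodicComplex_d (w : f ≫ g = 0) (n : ℕ) :
    (periodicComplex f g w).d (n + 1) n = g ≫ f :=
  ChainComplex.of_d (fun _ => P) (fun _ => g ≫ f) n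

lemma periodicComplex_d_comp (w : f ≫ g = 0) (n : ℕ) {Y : C} (h : P ⟶ Y) :
    (periodicComplex f g w).d (n + 1) n ≫ h = g ≫ f ≫ h := by
  rw [periodicComplex_d]
  exact Category.assoc _ _ _

lemma periodicComplex_d_comp_g (w : f ≫ g = 0) (n : ℕ) :
    (periodicComplex f g w).d (n + 1) n ≫ g = 0 :=
  (periodicComplex_d_comp w n g).trans (by rw [w, comp_zero]; rfl)

lemma periodicComplex_exactAt_succ {w : f ≫ g = 0} (hS : (ShortComplex.mk f g w).ShortExact)
    (n : ℕ) : (periodicComplex f g w).ExactAt (n + 1) := by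
  have := hS.mono_f
  have := hS.epi_g
  rw [HomologicalComplex.exactAt_iff' _ (n + 1 + 1) (n + 1) n (by simp) (by simp)]
  dsimp only [HomologicalComplex.sc', HomologicalComplex.shortComplexFunctor']
  simp only [periodicComplex_d]
  exact (ShortComplex.exact_epi_comp_iff g _).2 ((ShortComplex.exact_comp_mono_iff w f).2 hS.exact)

noncomputable def periodicResolution [Projective P] {w : f ≫ g = 0}
    (hS : (ShortComplex.mk f g w).ShortExact) : ProjectiveResolution N where
  complex := periodicComplex f g w
  projective _ := ‹Projective P›
  π := (ChainComplex.toSingle₀Equiv _ _).symm ⟨g, periodicComplex_d_comp_g w 0⟩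
  quasiIso := ⟨fun n => by
    cases n with
    | zero =>
      rw [ChainComplex.quasiIsoAt₀_iff, ShortComplex.quasiIso_iff_of_zeros']
      · have := hS.epi_g
        refine (ShortComplex.exact_and_epi_g_iff_of_iso ?_).2
          ⟨(ShortComplex.exact_epi_comp_iff g w).2 hS.exact, this⟩
        exact ShortComplex.isoMk (Iso.refl _) (Iso.refl _) (Iso.refl _)
          (by erw [Category.id_comp, Category.comp_id]; exact (periodicComplex_d w 0).symm)
          (by
            erw [Category.id_comp, Category.comp_id]
            exact (ChainComplex.toSingle₀Equiv_symm_apply_f_zero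
              (C := periodicComplex f g w) g _).symm)
      all_goals rfl
    | succ n =>
      rw [quasiIsoAt_iff_exactAt' _ _ (ChainComplex.exactAt_succ_single_obj _ _)]
      exact periodicComplex_exactAt_succ hS n⟩

theorem Projective.of_shortExact_of_subsingleton_ext (R : Type*) [Ring R] [Linear R C]
    [EnoughProjectives C] [Projective P] {w : f ≫ g = 0}
    (hS : (ShortComplex.mk f g w).ShortExact) (n : ℕ)
    (hExt : Subsingleton (((Ext R C (n + 1)).obj (Opposite.op N)).obj N)) : Projective N := by
  have := hS.epi_g
  have hK : ((periodicComplex f g w).linearYonedaObj R N).ExactAt (n + 1) := by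
    rw [HomologicalComplex.exactAt_iff_isZero_homology]
    exact (ModuleCat.isZero_of_subsingleton _).of_iso
      ((periodicResolution hS).isoExt (n + 1) N).symm
  rw [HomologicalComplex.exactAt_iff' _ n (n + 1) (n + 2) (by simp) (by simp),
    ShortComplex.moduleCat_exact_iff] at hK
  obtain ⟨(ψ : P ⟶ N), hψ⟩ := hK g (periodicComplex_d_comp_g w (n + 1))
  change (periodicComplex f g w).d (n + 1) n ≫ ψ = g at hψ
  have hψf : f ≫ ψ = 𝟙 N := by
    rw [← cancel_epi g, Category.comp_id, ← periodicComplex_d_comp w n, hψ]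
  exact Retract.projective ⟨f, ψ, hψf⟩

end CategoryTheory

section Modules

variable {R : Type u} [CommRing R]

theorem extVanishes_succ_of_projective_s6 (M N : Type u) [AddCommGroup M] [Module R M]
    [AddCommGroup N] [Module R N] [Module.Projective R M] (n : ℕ) : extVanishes R (n + 1) M N :=
  ModuleCat.subsingleton_of_isZero (isZero_Ext_succ_of_projective _ _ n)

theorem IsStronglyGorensteinProjective.projective_of_extVanishes {M : Type u} [AddCommGroup M]
    [Module R M] (hM : IsStronglyGorensteinProjective R M) {n : ℕ}
    (hExt : extVanishes R (n + 1) M M) : Module.Projective R M := by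
  obtain ⟨⟨P, f, g, hP, hf, hg, hfg⟩, -⟩ := hM
  have hexact : Function.Exact f g := LinearMap.exact_iff.mpr hfg.symm
  have hS := ModuleCat.shortComplex_shortExact
    (ModuleCat.shortComplexOfCompEqZero f g hexact.linearMap_comp_eq_zero) hexact hf hg
  have := Projective.of_shortExact_of_subsingleton_ext R hS n hExt
  exact (IsProjective.iff_projective M).mpr this

end Modules

/-- A G-semisimple ring is semisimple iff it has finite global dimension, i.e. iff there is an
`n : ℕ` with `Ext^{n+1}(M, N) = 0` for all modules `M`, `N`. -/
theorem gSemisimple_semisimple_iff_finite_global_dimension (R : Type u) [CommRing R]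
    (h : GSemisimple R) :
    IsSemisimpleRing R ↔ ∃ n : ℕ, ∀ M N : ModuleCat.{u} R, extVanishes R (n + 1) M N := by
  constructor
  · intro _
    refine ⟨0, fun M N => ?_⟩
    have := Module.projective_of_isSemisimpleRing R M
    exact extVanishes_succ_of_projective_s6 M N 0
  · rintro ⟨n, hn⟩
    refine isSemisimpleRing_of_forall_projective_quotient fun I => ?_
    obtain ⟨N, i, r, hN, hri⟩ := h (ModuleCat.of R (R ⧸ I))
    have := hN.projective_of_extVanishes (hn N N)
    exact Module.Projective.of_split i r hri
end

section
/- Let R be a local commutative ring and let x ∈ R be a nonzero zero-divisor (i.e., x ≠ 0 and there exists y ≠ 0 with xy = 0). If the ideal xR is a strongly Gorenstein projective R-module, then the annihilator Ann(xR) is isomorphic to xR as an R-module, and consequently Ann(Ann(xR)) = Ann(xR). In particular, if xR equals the maximal ideal m of R, then Ann(m) = m. -/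
open CategoryTheory

universe u

/-! The surjection `P → xR` is split by `R`: lifting it through `r ↦ r x` by projectivity sends
a preimage `p` of `x` into `1 + Ann(x)`, hence to a unit since `R` is local. So `P = Rp ⊕ K` with
`K` projective, and `K` is the projection of `ker (P → xR) ≅ xR`, hence finitely generated and
killed by `y`. Finitely generated projective modules over a local ring are free, so `K = 0` and
`P ≅ R`; the sequence becomes `0 → xR → R → xR → 0` with kernel `Ann(x)`, giving
`xR ≅ Ann(xR)`. -/

open LinearMap Submodule

theorem Submodule.span_singleton_mk_eq_top {R M : Type*} [Semiring R] [AddCommMonoid M]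
    [Module R M] (x : M) : R ∙ (⟨x, mem_span_singleton_self x⟩ : R ∙ x) = ⊤ := by
  refine eq_top_iff.mpr fun ⟨z, hz⟩ _ => ?_
  obtain ⟨a, rfl⟩ := mem_span_singleton.mp hz
  exact mem_span_singleton.mpr ⟨a, rfl⟩

namespace IsLocalRing

variable {R : Type*} [CommRing R] [IsLocalRing R]

theorem subsingleton_of_annihilator_ne_bot {K : Type*} [AddCommGroup K] [Module R K]
    [Module.Finite R K] [Module.Flat R K] (h : Module.annihilator R K ≠ ⊥) : Subsingleton K := by
  have := Module.free_of_flat_of_isLocalRing (R := R) (P := K)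
  by_contra hK
  rw [not_subsingleton_iff_nontrivial] at hK
  exact h (Module.annihilator_eq_bot.mpr inferInstance)

theorem exists_apply_eq_one_of_span_eq_top {P M : Type*} [AddCommGroup P] [Module R P]
    [Module.Projective R P] [AddCommGroup M] [Module R M] {g : P →ₗ[R] M} {m : M} (hm : m ≠ 0)
    (hspan : R ∙ m = ⊤) {p : P} (hp : g p = m) : ∃ ρ : P →ₗ[R] R, ρ p = 1 := by
  have hsurj : Function.Surjective (toSpanSingleton R M m) := by
    rw [← range_eq_top, range_toSpanSingleton, hspan]
  obtain ⟨w, hw⟩ := Module.projective_lifting_property _ g hsurj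
  have hwp : (w p - 1) • m = 0 := by
    rw [sub_smul, one_smul, ← toSpanSingleton_apply, ← LinearMap.comp_apply, hw, hp, sub_self]
  have hunit : IsUnit (w p) := by
    by_contra hn
    have := (isUnit_one_sub_self_of_mem_nonunits _ hn).neg
    rw [neg_sub] at this
    exact hm ((this.smul_eq_zero).mp hwp)
  exact ⟨(↑hunit.unit⁻¹ : R) • w, by simp⟩

theorem exists_linearEquiv_comp_eq_toSpanSingleton {N P M : Type*} [AddCommGroup N] [Module R N]
    [Module.Finite R N] [AddCommGroup P] [Module R P] [Module.Projective R P] [AddCommGroup M]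
    [Module R M] {f : N →ₗ[R] P} {g : P →ₗ[R] M} (hg : Function.Surjective g)
    (hfg : Function.Exact f g) (hN : Module.annihilator R N ≠ ⊥) {m : M} (hm : m ≠ 0)
    (hspan : R ∙ m = ⊤) : ∃ e : P ≃ₗ[R] R, g ∘ₗ e.symm.toLinearMap = toSpanSingleton R M m := by
  obtain ⟨p, rfl⟩ := hg m
  obtain ⟨ρ, hρ⟩ := exists_apply_eq_one_of_span_eq_top hm hspan rfl
  set π : P →ₗ[R] P := LinearMap.id - toSpanSingleton R P p ∘ₗ ρ
  have hπ : ∀ q, π q ∈ ker ρ := fun q => by simp [π, hρ]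
  have hker : ker ρ = range (π ∘ₗ f) := by
    ext k
    refine ⟨fun hk => ?_, ?_⟩
    · obtain ⟨r, hr⟩ := mem_span_singleton.mp (hspan ▸ mem_top : g k ∈ R ∙ g p)
      obtain ⟨n, hn⟩ := (hfg (k - r • p)).mp (by simp [hr])
      exact ⟨n, by simp [π, hn, mem_ker.mp hk, hρ]⟩
    · rintro ⟨n, rfl⟩
      exact hπ (f n)
  have : Module.Projective R (ker ρ) :=
    .of_split (ker ρ).subtype (codRestrict _ π hπ) (by ext ⟨k, hk⟩; simp [π, mem_ker.mp hk])
  have : Module.Finite R (ker ρ) := by rw [hker]; infer_instance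
  have : Subsingleton (ker ρ) := by
    refine subsingleton_of_annihilator_ne_bot (R := R) fun h => hN ?_
    rw [← le_bot_iff, ← h]
    show _ ≤ (ker ρ).annihilator
    rw [hker]
    exact annihilator_le_of_surjective _ (π ∘ₗ f).surjective_rangeRestrict
  have hinj : Function.Injective ρ := by
    rw [← ker_eq_bot, ← subsingleton_iff_eq_bot]
    infer_instance
  let e := LinearEquiv.ofBijective ρ ⟨hinj, fun r => ⟨r • p, by simp [hρ]⟩⟩
  refine ⟨e, ext_ring ?_⟩
  simp [e.symm_apply_eq.mpr hρ.symm]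

theorem nonempty_linearEquiv_annihilator_of_exact {N P M : Type*} [AddCommGroup N] [Module R N]
    [Module.Finite R N] [AddCommGroup P] [Module R P] [Module.Projective R P] [AddCommGroup M]
    [Module R M] {f : N →ₗ[R] P} {g : P →ₗ[R] M} (hf : Function.Injective f)
    (hg : Function.Surjective g) (hfg : Function.Exact f g) (hN : Module.annihilator R N ≠ ⊥)
    {m : M} (hm : m ≠ 0) (hspan : R ∙ m = ⊤) : Nonempty (N ≃ₗ[R] Module.annihilator R M) := by
  obtain ⟨e, he⟩ := exists_linearEquiv_comp_eq_toSpanSingleton hg hfg hN hm hspan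
  have hrange : range (e.toLinearMap ∘ₗ f) = Module.annihilator R M := by
    rw [range_comp, ← hfg.linearMap_ker_eq, map_equiv_eq_comap_symm, ← ker_comp, he,
      ← annihilator_span_singleton, hspan, annihilator_top]
  exact ⟨(LinearEquiv.ofInjective (e.toLinearMap ∘ₗ f) (e.injective.comp hf)).trans
    (LinearEquiv.ofEq _ _ hrange)⟩

end IsLocalRing

/-- If `x` is a nonzero zero-divisor of a local commutative ring `R` such that the ideal `xR` is
strongly Gorenstein projective, then `Ann(xR) ≅ xR`, hence `Ann(Ann(xR)) = Ann(xR)`; in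
particular if `xR = m` is the maximal ideal, then `Ann(m) = m`. -/
theorem ann_eq_of_span_sgProjective (R : Type u) [CommRing R] [IsLocalRing R]
    (x : R) (hx : x ≠ 0) (hzd : ∃ y : R, y ≠ 0 ∧ x * y = 0)
    (hSGP : IsStronglyGorensteinProjective R (Ideal.span {x} : Ideal R)) :
    Nonempty ((↥(Ideal.span {x} : Ideal R).annihilator) ≃ₗ[R] ↥(Ideal.span {x} : Ideal R)) ∧
    (Ideal.span {x} : Ideal R).annihilator.annihilator =
      (Ideal.span {x} : Ideal R).annihilator ∧
    (Ideal.span {x} = IsLocalRing.maximalIdeal R →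
      (IsLocalRing.maximalIdeal R).annihilator = IsLocalRing.maximalIdeal R) := by
  obtain ⟨y, hy, hxy⟩ := hzd
  obtain ⟨⟨P, f, g, hP, hf, hg, hfg⟩, -⟩ := hSGP
  have hann : (Ideal.span {x}).annihilator ≠ ⊥ := fun h => hy <| by
    rw [← Submodule.mem_bot R, ← h, Ideal.span, mem_annihilator_span_singleton, smul_eq_mul,
      mul_comm, hxy]
  obtain ⟨e⟩ := IsLocalRing.nonempty_linearEquiv_annihilator_of_exact hf hg
    (LinearMap.exact_iff.mpr hfg.symm) hann (by simpa using hx) (span_singleton_mk_eq_top x)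
  have hann₂ : (Ideal.span {x}).annihilator.annihilator = (Ideal.span {x}).annihilator :=
    e.annihilator_eq.symm
  refine ⟨⟨e.symm⟩, hann₂, fun hmax => ?_⟩
  rw [← hmax]
  refine le_antisymm ?_ ?_
  · refine (IsLocalRing.le_maximalIdeal fun h => hx ?_).trans hmax.ge
    simpa using annihilator_eq_top_iff.mp h
  · rw [← hann₂, le_annihilator_iff, Ideal.smul_eq_mul, mul_comm]
    exact annihilator_mul _
end

section
/- Let R be a local commutative ring and let I be a nonzero proper ideal of R. If R/I is a strongly Gorenstein projective R-module, then I is a principal ideal generated by a zero-divisor of R, and I is itself a strongly Gorenstein projective R-module. -/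
/-!
Let `0 → R/I → P → R/I → 0` be the defining sequence. `P` is generated by a lift of `1` and
by `q = f 1`, so it is finitely generated projective over a local ring, hence free. A nonzero
element of `I` kills `q`, so every coordinate of `q` lies in the maximal ideal and Nakayama
makes `P` cyclic, i.e. `P ≅ R`. The sequence now reads `0 → R/I → R → R/I → 0`: the surjection
has kernel `I`, the injection has image `(a)` for `a` the image of `1`, and its injectivity
says `ann(a) = I`. Hence `I = (a) ≅ R/ann(a) = R/I`.
-/

open CategoryTheory

universe u

open Submodule LinearMap IsLocalRing

section Transport

variable {R : Type u} [CommRing R] {M N : Type u} [AddCommGroup M] [Module R M]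
  [AddCommGroup N] [Module R N]

lemma extVanishes.of_linearEquiv (e : M ≃ₗ[R] N) {n : ℕ} {Q : Type u} [AddCommGroup Q]
    [Module R Q] (h : extVanishes R n M Q) : extVanishes R n N Q := by
  unfold extVanishes at h ⊢
  exact (((Ext R (ModuleCat.{u} R) n).mapIso e.toModuleIso.op).app
    (ModuleCat.of R Q)).toLinearEquiv.toEquiv.subsingleton

lemma IsStronglyGorensteinProjective.of_linearEquiv (e : M ≃ₗ[R] N)
    (h : IsStronglyGorensteinProjective R M) : IsStronglyGorensteinProjective R N := by
  obtain ⟨⟨P, f, g, hP, hf, hg, hfg⟩, hext⟩ := h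
  refine ⟨⟨P, f ∘ₗ e.symm.toLinearMap, e.toLinearMap ∘ₗ g, hP, hf.comp e.symm.injective,
    e.surjective.comp hg, ?_⟩, fun Q hQ => (hext Q hQ).of_linearEquiv e⟩
  rw [range_comp, ker_comp, LinearEquiv.range, Submodule.map_top, LinearEquiv.ker, comap_bot,
    hfg]

end Transport

section Exact

variable {R : Type*} [CommRing R] {M P N : Type*} [AddCommGroup M] [Module R M]
  [AddCommGroup P] [Module R P] [AddCommGroup N] [Module R N]

lemma LinearMap.range_eq_span_singleton_of_span_eq_top (f : M →ₗ[R] P) {m : M}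
    (hm : span R {m} = ⊤) : range f = span R {f m} := by
  rw [range_eq_map, ← hm, map_span, Set.image_singleton]

lemma span_pair_eq_top_of_range_eq_ker {f : M →ₗ[R] P} {g : P →ₗ[R] N} (hfg : range f = ker g)
    {m : M} (hm : span R {m} = ⊤) {n : N} (hn : span R {n} = ⊤) {p : P} (hp : g p = n) :
    span R {p, f m} = ⊤ := by
  refine eq_top_iff.2 fun x _ => ?_
  obtain ⟨r, hr⟩ := mem_span_singleton.1 (hn ▸ mem_top : g x ∈ span R {n})
  have hx : x - r • p ∈ span R {f m} := by
    rw [← f.range_eq_span_singleton_of_span_eq_top hm, hfg, mem_ker, map_sub, map_smul, hp, hr,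
      sub_self]
  obtain ⟨s, hs⟩ := mem_span_singleton.1 hx
  exact mem_span_pair.2 ⟨r, s, by rw [hs]; abel⟩

end Exact

section Cyclic

variable {R : Type*} [CommRing R]

noncomputable def linearEquivOfSpanSingletonEqTop {P : Type*} [AddCommGroup P] [Module R P]
    [FaithfulSMul R P] {e : P} (he : span R {e} = ⊤) : R ≃ₗ[R] P :=
  LinearEquiv.ofBijective (toSpanSingleton R P e) <| by
    refine ⟨(injective_iff_map_eq_zero _).2 fun r hr => ?_, range_eq_top.1 <| by
      rw [range_toSpanSingleton, he]⟩
    refine FaithfulSMul.eq_of_smul_eq_smul (α := P) fun x => ?_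
    obtain ⟨s, rfl⟩ := mem_span_singleton.1 (he ▸ mem_top : x ∈ span R {e})
    rw [toSpanSingleton_apply] at hr
    rw [smul_comm, hr, smul_zero, zero_smul]

end Cyclic

section Local

variable {R : Type*} [CommRing R] [IsLocalRing R] {P : Type*} [AddCommGroup P] [Module R P]

lemma mem_maximalIdeal_smul_top_of_smul_eq_zero [Module.Free R P] {q : P} {y : R} (hy : y ≠ 0)
    (hyq : y • q = 0) : q ∈ maximalIdeal R • (⊤ : Submodule R P) := by
  let b := Module.Free.chooseBasis R P
  rw [← b.linearCombination_repr q, Finsupp.linearCombination_apply]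
  refine Submodule.finsuppSum_mem _ _ _ _ fun i _ => smul_mem_smul ?_ mem_top
  have hyqi : y * b.repr q i = 0 := by simpa using congr(b.repr $hyq i)
  exact (mem_maximalIdeal _).2 fun hu => hy (hu.mul_left_eq_zero.1 hyqi)

lemma span_singleton_eq_top_of_span_pair_eq_top [Module.Finite R P] {e q : P}
    (h : span R {e, q} = ⊤) (hq : q ∈ maximalIdeal R • (⊤ : Submodule R P)) :
    span R {e} = ⊤ := by
  refine top_le_iff.1 <| le_of_le_smul_of_le_jacobson_bot Module.Finite.fg_top
    (maximalIdeal_le_jacobson _) ?_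
  calc ⊤ = span R {e} ⊔ span R {q} := by rw [← h, span_insert]
    _ ≤ span R {e} ⊔ maximalIdeal R • ⊤ :=
      sup_le_sup_left ((span_singleton_le_iff_mem _ _).2 hq) _

lemma exists_linearEquiv_of_range_eq_ker {I : Ideal R} (hI0 : I ≠ ⊥) (hItop : I ≠ ⊤)
    [Module.Projective R P] {f : R ⧸ I →ₗ[R] P} {g : P →ₗ[R] R ⧸ I}
    (hg : Function.Surjective g) (hfg : range f = ker g) : Nonempty (R ≃ₗ[R] P) := by
  obtain ⟨p, hp⟩ := hg 1
  have hspan : span R {p, f 1} = ⊤ := span_pair_eq_top_of_range_eq_ker hfg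
    (Ideal.Quotient.span_singleton_one I) (Ideal.Quotient.span_singleton_one I) hp
  have : Module.Finite R P := ⟨hspan ▸ fg_span (Set.toFinite _)⟩
  have : Module.Free R P := Module.free_of_flat_of_isLocalRing
  have : Nontrivial (R ⧸ I) := Ideal.Quotient.nontrivial_iff.2 hItop
  have : Nontrivial P := hg.nontrivial
  obtain ⟨y, hyI, hy0⟩ := exists_mem_ne_zero_of_ne_bot hI0
  have hy : y • f 1 = 0 := by
    rw [← map_smul, Algebra.smul_def, mul_one, Ideal.Quotient.algebraMap_eq,
      Ideal.Quotient.eq_zero_iff_mem.2 hyI, map_zero]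
  exact ⟨linearEquivOfSpanSingletonEqTop <| span_singleton_eq_top_of_span_pair_eq_top hspan
    (mem_maximalIdeal_smul_top_of_smul_eq_zero hy0 hy)⟩

end Local

section Quotient

variable {R : Type*} [CommRing R] {I : Ideal R}

lemma Ideal.torsionOf_apply_one_eq_of_injective {f : R ⧸ I →ₗ[R] R}
    (hf : Function.Injective f) : Ideal.torsionOf R R (f 1) = I := by
  ext r
  rw [Ideal.mem_torsionOf_iff, ← map_smul, Algebra.smul_def, mul_one, map_eq_zero_iff f hf,
    Ideal.Quotient.algebraMap_eq, Ideal.Quotient.eq_zero_iff_mem]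

lemma LinearMap.ker_eq_of_surjective_quotient {g : R →ₗ[R] R ⧸ I}
    (hg : Function.Surjective g) : ker g = I := by
  obtain ⟨s, hs⟩ := hg 1
  have hunit : IsUnit (g 1) := IsUnit.of_mul_eq_one (Ideal.Quotient.mk I s) <| by
    rw [mul_comm, ← Ideal.Quotient.algebraMap_eq, ← Algebra.smul_def, ← map_smul, smul_eq_mul,
      mul_one, hs]
  ext r
  have hgr : g r = Ideal.Quotient.mk I r * g 1 := by
    rw [← Ideal.Quotient.algebraMap_eq, ← Algebra.smul_def, ← map_smul, smul_eq_mul, mul_one]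
  rw [mem_ker, hgr, hunit.mul_left_eq_zero, Ideal.Quotient.eq_zero_iff_mem]

lemma Ideal.eq_span_singleton_apply_one_of_range_eq_ker {f : R ⧸ I →ₗ[R] R} {g : R →ₗ[R] R ⧸ I}
    (hg : Function.Surjective g) (hfg : range f = ker g) : I = Ideal.span {f 1} := by
  calc I = ker g := (ker_eq_of_surjective_quotient hg).symm
    _ = Ideal.span {f 1} := by
      rw [← hfg, f.range_eq_span_singleton_of_span_eq_top
        (Ideal.Quotient.span_singleton_one I)]

end Quotient

/-- If `I` is a nonzero proper ideal of a local commutative ring `R` such that `R/I` is a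
strongly Gorenstein projective `R`-module, then `I` is principal, generated by a zero-divisor,
and `I` is itself strongly Gorenstein projective. -/
theorem ideal_sgProjective_of_quotient_sgProjective (R : Type u) [CommRing R] [IsLocalRing R]
    (I : Ideal R) (hI0 : I ≠ ⊥) (hItop : I ≠ ⊤)
    (h : IsStronglyGorensteinProjective R (R ⧸ I)) :
    (∃ x : R, (∃ y : R, y ≠ 0 ∧ x * y = 0) ∧ I = Ideal.span {x}) ∧
    IsStronglyGorensteinProjective R I := by
  obtain ⟨P, f, g, hP, hf, hg, hfg⟩ := h.1
  obtain ⟨φ⟩ := exists_linearEquiv_of_range_eq_ker hI0 hItop hg hfg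
  let f' : R ⧸ I →ₗ[R] R := φ.symm.toLinearMap ∘ₗ f
  let g' : R →ₗ[R] R ⧸ I := g ∘ₗ φ.toLinearMap
  have hfg' : range f' = ker g' := by
    rw [range_comp, ker_comp, hfg, Submodule.map_equiv_eq_comap_symm, LinearEquiv.symm_symm]
  have hann : Ideal.torsionOf R R (f' 1) = I :=
    Ideal.torsionOf_apply_one_eq_of_injective (φ.symm.injective.comp hf)
  have hIa : I = Ideal.span {f' 1} :=
    Ideal.eq_span_singleton_apply_one_of_range_eq_ker (hg.comp φ.surjective) hfg'
  obtain ⟨y, hyI, hy0⟩ := exists_mem_ne_zero_of_ne_bot hI0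
  have hya : f' 1 * y = 0 := by
    rw [mul_comm, ← smul_eq_mul, ← Ideal.mem_torsionOf_iff, hann]
    exact hyI
  exact ⟨⟨f' 1, ⟨y, hy0, hya⟩, hIa⟩,
    h.of_linearEquiv <| (Submodule.quotEquivOfEq _ _ hann.symm).trans <|
      (Ideal.quotTorsionOfEquivSpanSingleton R R (f' 1)).trans (LinearEquiv.ofEq _ _ hIa.symm)⟩
end

section
/- Let R be a local commutative ring. Then R is SG-semisimple if and only if R has at most one nonzero proper ideal, i.e., there is at most one ideal I of R with I ≠ 0 and I ≠ R. -/
open CategoryTheory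

universe u

/-!
If `R` is SG-semisimple, the residue field `k` sits in a sequence `0 → k → P → k → 0` with `P`
projective. Then `P` is finite, hence free, and `r ↦ r • b` for a basis vector `b` embeds the
maximal ideal `𝔪` into `ker (P → k) ≅ k`, which is simple; so `𝔪 = 0` or `𝔪` is a minimal ideal.

Conversely, if `𝔪` is the only nonzero proper ideal, either `R` is a field, where every module is
free and injective, or `𝔪 = (x)` with `Ann x = (x)`. In the latter case every module splits as
`R^(ι) ⊕ C` with `x C = 0`; the free part is self-extended by `0 → F → F × F → F → 0` and
`C ≅ k^(τ)` by copies of `0 → k --x--> R → k → 0`. Tensoring the exact `R --x--> R --x--> R` with a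
flat `Q` shows that `x`-torsion in `Q` is `x`-divisible, which is Baer's criterion for the only
interesting ideal `(x)`; so projective modules are injective and `Ext¹(M, Q) = 0`.
-/

open Limits in
theorem isZero_Ext_succ_of_injective {R : Type*} [Ring R] {C : Type*} [Category C] [Abelian C]
    [Linear R C] [EnoughProjectives C] (X Y : C) [Injective Y] (n : ℕ) :
    IsZero (((Ext R C (n + 1)).obj (Opposite.op X)).obj Y) := by
  let P := ProjectiveResolution.of X
  refine IsZero.of_iso ?_ (P.isoExt (n + 1) Y)
  rw [← HomologicalComplex.exactAt_iff_isZero_homology,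
    HomologicalComplex.exactAt_iff' _ n (n + 1) (n + 2) (by simp) (by simp),
    ShortComplex.moduleCat_exact_iff]
  intro φ hφ
  exact ⟨(P.exact_succ n).descToInjective φ hφ, (P.exact_succ n).comp_descToInjective φ hφ⟩

theorem extVanishes_succ_of_injective {R : Type u} [CommRing R] (n : ℕ) (M Q : Type u)
    [AddCommGroup M] [Module R M] [AddCommGroup Q] [Module R Q] [Module.Injective R Q] :
    extVanishes R (n + 1) M Q :=
  have := Module.injective_object_of_injective_module R Q
  ModuleCat.subsingleton_of_isZero (isZero_Ext_succ_of_injective _ _ n)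

theorem Module.Baer.of_forall_ne_bot_ne_top {R Q : Type*} [CommRing R] [AddCommGroup Q]
    [Module R Q] (h : ∀ I : Ideal R, I ≠ ⊥ → I ≠ ⊤ → ∀ g : I →ₗ[R] Q,
      ∃ g' : R →ₗ[R] Q, ∀ y (hy : y ∈ I), g' y = g ⟨y, hy⟩) :
    Module.Baer R Q := by
  intro I g
  by_cases hbot : I = ⊥
  · subst hbot
    refine ⟨0, fun y hy => ?_⟩
    obtain rfl := (Submodule.mem_bot R).1 hy
    exact (map_zero g).symm
  by_cases htop : I = ⊤
  · subst htop
    exact ⟨g ∘ₗ LinearMap.codRestrict ⊤ LinearMap.id fun _ => trivial, fun _ _ => rfl⟩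
  exact h I hbot htop g

theorem isCompl_of_sup_eq_top {α : Type*} [Lattice α] [BoundedOrder α] {a b c : α}
    (hab : a ⊔ b = ⊤) (hsup : a ⊓ b ⊔ c = b) (hinf : a ⊓ b ⊓ c = ⊥) : IsCompl a c := by
  have hcb : c ≤ b := hsup ▸ le_sup_right
  constructor
  · rw [disjoint_iff, ← inf_eq_right.2 hcb, ← inf_assoc, hinf]
  · rw [codisjoint_iff, ← hab, ← hsup, ← sup_assoc, sup_inf_self]

theorem Submodule.exists_complement_le_of_isSemisimpleModule {R M : Type*} [Ring R]
    [AddCommGroup M] [Module R M] {N A : Submodule R M} [IsSemisimpleModule R A] (hNA : N ≤ A) :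
    ∃ C, N ⊔ C = A ∧ N ⊓ C = ⊥ := by
  have : ComplementedLattice (Set.Iic A) := A.mapIic.complementedLattice_iff.1 inferInstance
  obtain ⟨⟨C, hCA⟩, hC⟩ := ComplementedLattice.exists_isCompl (⟨N, hNA⟩ : Set.Iic A)
  exact ⟨C, congrArg Subtype.val hC.sup_eq_top, congrArg Subtype.val hC.inf_eq_bot⟩

namespace Module.IsTorsionBySet

variable {R : Type u} [CommRing R] {M : Type u} [AddCommGroup M] [Module R M] {I : Ideal R}
  [I.IsMaximal]

theorem exists_linearEquiv_finsupp (h : IsTorsionBySet R M I) :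
    ∃ τ : Type u, Nonempty (M ≃ₗ[R] (τ →₀ R ⧸ I)) := by
  let := Ideal.Quotient.field I
  let := h.module
  have := h.isScalarTower (S := R)
  exact ⟨_, ⟨(Module.Free.chooseBasis (R ⧸ I) M).repr.restrictScalars R⟩⟩

theorem isSemisimpleModule (h : IsTorsionBySet R M I) : IsSemisimpleModule R M := by
  obtain ⟨τ, ⟨e⟩⟩ := h.exists_linearEquiv_finsupp
  have : IsSimpleModule R (R ⧸ I) := isSimpleModule_iff_isCoatom.2 Ideal.IsMaximal.out
  exact IsSemisimpleModule.congr e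

end Module.IsTorsionBySet

open scoped Pointwise in
theorem Finsupp.ker_mapRange_mkQ_span_singleton {R : Type*} [CommRing R] (x : R) (ι : Type*) :
    LinearMap.ker (Finsupp.mapRange.linearMap (α := ι) (Ideal.span {x}).mkQ) = x • ⊤ := by
  rw [Finsupp.ker_mapRange, Submodule.ker_mkQ, ← (Ideal.span {x}).mul_top, ← smul_eq_mul,
    Finsupp.submodule_smul]
  simp [Submodule.ideal_span_singleton_smul]

def HasProjectiveSelfExtension (R : Type u) [CommRing R] (M : Type u) [AddCommGroup M]
    [Module R M] : Prop :=
  ∃ (P : ModuleCat.{u} R) (f : M →ₗ[R] P) (g : P →ₗ[R] M),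
    Module.Projective R P ∧ Function.Injective f ∧ Function.Surjective g ∧
    LinearMap.range f = LinearMap.ker g

namespace HasProjectiveSelfExtension

variable {R : Type u} [CommRing R] {M N : Type u} [AddCommGroup M] [Module R M]
  [AddCommGroup N] [Module R N]

theorem of_projective [Module.Projective R M] : HasProjectiveSelfExtension R M :=
  ⟨.of R (M × M), .inl R M M, .snd R M M, inferInstanceAs (Module.Projective R (M × M)),
    LinearMap.inl_injective, Prod.snd_surjective, LinearMap.range_inl R M M⟩

theorem of_linearEquiv (e : M ≃ₗ[R] N) (h : HasProjectiveSelfExtension R M) :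
    HasProjectiveSelfExtension R N := by
  obtain ⟨P, f, g, hP, hf, hg, hfg⟩ := h
  refine ⟨P, f ∘ₗ e.symm.toLinearMap, e.toLinearMap ∘ₗ g, hP, hf.comp e.symm.injective,
    e.surjective.comp hg, ?_⟩
  rw [LinearMap.range_comp_of_range_eq_top _ e.symm.range, LinearEquiv.ker_comp, hfg]

theorem prod (hM : HasProjectiveSelfExtension R M) (hN : HasProjectiveSelfExtension R N) :
    HasProjectiveSelfExtension R (M × N) := by
  obtain ⟨P, f, g, hP, hf, hg, hfg⟩ := hM
  obtain ⟨P', f', g', hP', hf', hg', hfg'⟩ := hN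
  refine ⟨.of R (P × P'), f.prodMap f', g.prodMap g',
    inferInstanceAs (Module.Projective R (P × P')), hf.prodMap hf', hg.prodMap hg', ?_⟩
  rw [LinearMap.range_prodMap, LinearMap.ker_prodMap, hfg, hfg']

theorem finsupp (τ : Type u) (h : HasProjectiveSelfExtension R M) :
    HasProjectiveSelfExtension R (τ →₀ M) := by
  classical
  obtain ⟨P, f, g, hP, hf, hg, hfg⟩ := h
  refine ⟨.of R (τ →₀ P), Finsupp.mapRange.linearMap f, Finsupp.mapRange.linearMap g,
    .of_equiv (finsuppLequivDFinsupp R).symm, Finsupp.mapRange_injective _ (map_zero f) hf,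
    Finsupp.mapRange_surjective _ (map_zero g) hg, ?_⟩
  rw [Finsupp.range_mapRange_linearMap f (LinearMap.ker_eq_bot.2 hf), Finsupp.ker_mapRange, hfg]

theorem quotient_span_singleton {x : R} (hx : ∀ r, r * x = 0 ↔ r ∈ Ideal.span {x}) :
    HasProjectiveSelfExtension R (R ⧸ Ideal.span {x}) := by
  have hker : LinearMap.ker (LinearMap.toSpanSingleton R R x) = Ideal.span {x} := by
    ext r
    exact hx r
  refine ⟨.of R R, (Ideal.span {x}).liftQ _ hker.ge, (Ideal.span {x}).mkQ,
    inferInstanceAs (Module.Projective R R), ?_, Submodule.mkQ_surjective _, ?_⟩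
  · exact LinearMap.ker_eq_bot.1 (Submodule.ker_liftQ_eq_bot _ _ _ hker.le)
  · rw [Submodule.range_liftQ, Submodule.ker_mkQ, ← LinearMap.span_singleton_eq_range]

end HasProjectiveSelfExtension

section AnnihilatorEqSpan

variable {R : Type u} [CommRing R] {x : R}

theorem Module.Flat.exists_smul_eq_of_smul_eq_zero (hx : ∀ r, r * x = 0 ↔ r ∈ Ideal.span {x})
    {Q : Type u} [AddCommGroup Q] [Module R Q] [Module.Flat R Q] {q : Q} (hq : x • q = 0) :
    ∃ q', x • q' = q := by
  have hR : Function.Exact (LinearMap.mulRight R x) (LinearMap.mulRight R x) := fun r => by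
    simp only [LinearMap.mulRight_apply, hx, Ideal.mem_span_singleton', Set.mem_range]
  have hladder : LinearMap.lsmul R Q x ∘ₗ (TensorProduct.rid R Q).toLinearMap =
      (TensorProduct.rid R Q).toLinearMap ∘ₗ (LinearMap.mulRight R x).lTensor Q :=
    TensorProduct.ext' fun q r => by simp [mul_smul, smul_comm r x q]
  exact ((Function.Exact.iff_of_ladder_linearEquiv hladder hladder).2
    (Module.Flat.lTensor_exact Q hR) q).1 hq

theorem Module.Flat.exists_extension_of_span_singleton
    (hx : ∀ r, r * x = 0 ↔ r ∈ Ideal.span {x}) {Q : Type u} [AddCommGroup Q] [Module R Q]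
    [Module.Flat R Q] (g : Ideal.span {x} →ₗ[R] Q) :
    ∃ g' : R →ₗ[R] Q, ∀ y (hy : y ∈ Ideal.span {x}), g' y = g ⟨y, hy⟩ := by
  have hx' : x ∈ Ideal.span {x} := Ideal.mem_span_singleton_self x
  have hxx : x • (⟨x, hx'⟩ : Ideal.span {x}) = 0 := Subtype.ext ((hx x).2 hx')
  obtain ⟨q, hq⟩ := exists_smul_eq_of_smul_eq_zero hx (q := g ⟨x, hx'⟩)
    (by rw [← map_smul, hxx, map_zero])
  refine ⟨LinearMap.toSpanSingleton R Q q, fun y hy => ?_⟩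
  obtain ⟨c, rfl⟩ := Ideal.mem_span_singleton'.1 hy
  have : (⟨c * x, hy⟩ : Ideal.span {x}) = c • ⟨x, hx'⟩ := rfl
  rw [this, map_smul, ← hq, LinearMap.toSpanSingleton_apply, mul_smul]

theorem Module.Flat.injective_of_forall_ideal_eq_span_singleton
    (hx : ∀ r, r * x = 0 ↔ r ∈ Ideal.span {x})
    (hI : ∀ I : Ideal R, I ≠ ⊥ → I ≠ ⊤ → I = Ideal.span {x})
    (Q : Type u) [AddCommGroup Q] [Module R Q] [Module.Flat R Q] : Module.Injective R Q :=
  Module.Baer.injective <| .of_forall_ne_bot_ne_top fun I hbot htop => by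
    obtain rfl := hI I hbot htop
    exact exists_extension_of_span_singleton hx

/- The free part lifts a basis of the `R ⧸ (x)`-vector space `M ⧸ ker x`; the complement is taken
inside the semisimple module `ker x`. -/
open scoped Pointwise in
theorem exists_injective_finsupp_isCompl_le_torsionBy
    (hx : ∀ r, r * x = 0 ↔ r ∈ Ideal.span {x}) [(Ideal.span {x}).IsMaximal]
    (M : Type u) [AddCommGroup M] [Module R M] :
    ∃ (ι : Type u) (φ : (ι →₀ R) →ₗ[R] M) (C : Submodule R M), Function.Injective φ ∧
      IsCompl (LinearMap.range φ) C ∧ C ≤ Submodule.torsionBy R M x := by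
  set A := Submodule.torsionBy R M x
  have hxx : x * x = 0 := (hx x).2 (Ideal.mem_span_singleton_self x)
  have hA : Module.IsTorsionBySet R A (Ideal.span {x}) :=
    (Module.isTorsionBySet_span_singleton_iff x).2 (Submodule.torsionBy_isTorsionBy x)
  have hMA : Module.IsTorsionBySet R (M ⧸ A) (Ideal.span {x}) := by
    refine (Module.isTorsionBySet_span_singleton_iff x).2 fun y => ?_
    induction y using Submodule.Quotient.induction_on with | H y => ?_
    rw [← Submodule.Quotient.mk_smul, Submodule.Quotient.mk_eq_zero, Submodule.mem_torsionBy_iff,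
      smul_smul, hxx, zero_smul]
  obtain ⟨ι, ⟨ε⟩⟩ := hMA.exists_linearEquiv_finsupp
  set π := ε.symm.toLinearMap ∘ₗ Finsupp.mapRange.linearMap (Ideal.span {x}).mkQ
  obtain ⟨φ, hφ⟩ := Module.projective_lifting_property A.mkQ π A.mkQ_surjective
  have hdvd : ∀ v, φ v ∈ A → ∃ w, x • w = v := by
    intro v hv
    have : v ∈ LinearMap.ker (Finsupp.mapRange.linearMap (α := ι) (Ideal.span {x}).mkQ) := by
      rw [LinearMap.mem_ker, ← ε.symm.map_eq_zero_iff, ← (Submodule.Quotient.mk_eq_zero A).2 hv]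
      exact (congrArg (· v) hφ).symm
    rw [Finsupp.ker_mapRange_mkQ_span_singleton, Submodule.mem_smul_pointwise_iff_exists] at this
    obtain ⟨w, -, hw⟩ := this
    exact ⟨w, hw⟩
  have hinj : Function.Injective φ := by
    refine (injective_iff_map_eq_zero φ).2 fun v hv => ?_
    obtain ⟨w, rfl⟩ := hdvd v (hv ▸ A.zero_mem)
    obtain ⟨w', rfl⟩ := hdvd w (by rwa [Submodule.mem_torsionBy_iff, ← map_smul])
    rw [smul_smul, hxx, zero_smul]
  have hsup : LinearMap.range φ ⊔ A = ⊤ := by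
    have hπ : Function.Surjective π := ε.symm.surjective.comp
      (Finsupp.mapRange_surjective _ (map_zero _) (Submodule.mkQ_surjective _))
    rw [sup_comm, ← Submodule.comap_map_mkQ, ← LinearMap.range_comp, hφ,
      LinearMap.range_eq_top.2 hπ, Submodule.comap_top]
  have := hA.isSemisimpleModule
  obtain ⟨C, hCsup, hCinf⟩ := Submodule.exists_complement_le_of_isSemisimpleModule
    (inf_le_right (a := LinearMap.range φ) (b := A))
  exact ⟨ι, φ, C, hinj, isCompl_of_sup_eq_top hsup hCsup hCinf, hCsup ▸ le_sup_right⟩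

theorem HasProjectiveSelfExtension.of_mul_eq_zero_iff_mem_span
    (hx : ∀ r, r * x = 0 ↔ r ∈ Ideal.span {x}) [(Ideal.span {x}).IsMaximal]
    (M : Type u) [AddCommGroup M] [Module R M] : HasProjectiveSelfExtension R M := by
  obtain ⟨ι, φ, C, hφ, hφC, hC⟩ := exists_injective_finsupp_isCompl_le_torsionBy hx M
  have hCx : Module.IsTorsionBySet R C (Ideal.span {x}) :=
    (Module.isTorsionBySet_span_singleton_iff x).2 fun c => Subtype.ext (hC c.2)
  obtain ⟨τ, ⟨e⟩⟩ := hCx.exists_linearEquiv_finsupp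
  have hF : HasProjectiveSelfExtension R (LinearMap.range φ) :=
    .of_linearEquiv (LinearEquiv.ofInjective φ hφ) .of_projective
  have hC : HasProjectiveSelfExtension R C :=
    .of_linearEquiv e.symm ((quotient_span_singleton hx).finsupp τ)
  exact (hF.prod hC).of_linearEquiv (Submodule.prodEquivOfIsCompl _ _ hφC)

end AnnihilatorEqSpan

theorem sgSemisimple_of_isField {R : Type u} [CommRing R] (hR : IsField R) : SGSemisimple R := by
  let := hR.toField
  have hinj : ∀ Q : Type u, [AddCommGroup Q] → [Module R Q] → Module.Injective R Q :=
    fun Q _ _ => Module.Baer.injective <| .of_forall_ne_bot_ne_top fun I hbot htop =>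
      absurd ((Ideal.eq_bot_or_top I).resolve_left hbot) htop
  exact fun M => ⟨HasProjectiveSelfExtension.of_projective, fun Q _ =>
    have := hinj Q
    extVanishes_succ_of_injective 0 M Q⟩

theorem Submodule.eq_bot_or_isAtom_of_injective {R M S : Type*} [Ring R] [AddCommGroup M]
    [Module R M] [AddCommGroup S] [Module R S] [IsSimpleModule R S] {N : Submodule R M}
    (f : N →ₗ[R] S) (hf : Function.Injective f) : N = ⊥ ∨ IsAtom N := by
  rcases eq_bot_or_eq_top (LinearMap.range f) with h | h
  · left
    rw [← Submodule.subsingleton_iff_eq_bot]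
    have : Subsingleton (LinearMap.range f) := Submodule.subsingleton_iff_eq_bot.2 h
    exact (LinearEquiv.ofInjective f hf).toEquiv.subsingleton
  · right
    rw [← isSimpleModule_iff_isAtom]
    exact IsSimpleModule.congr (LinearEquiv.ofBijective f ⟨hf, LinearMap.range_eq_top.1 h⟩)

namespace IsLocalRing

variable {R : Type u} [CommRing R] [IsLocalRing R]

theorem maximalIdeal_eq_bot_or_isAtom (h : HasProjectiveSelfExtension R (R ⧸ maximalIdeal R)) :
    maximalIdeal R = ⊥ ∨ IsAtom (maximalIdeal R) := by
  obtain ⟨P, f, g, hP, hf, hg, hfg⟩ := h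
  have : Module.Finite R P := .of_exact (LinearMap.exact_iff.2 hfg.symm) hg
  have : Module.Free R P := Module.free_of_flat_of_isLocalRing
  have : Nontrivial P := hg.nontrivial
  let b := Module.Free.chooseBasis R P
  obtain ⟨i⟩ := b.index_nonempty
  set φ := LinearMap.toSpanSingleton R P (b i) ∘ₗ (maximalIdeal R).subtype
  have hφ : Function.Injective φ :=
    (b.linearIndependent.smul_left_injective i).comp Subtype.val_injective
  have hmem : ∀ r, φ r ∈ LinearMap.range f := fun r => by
    rw [hfg, LinearMap.mem_ker, LinearMap.comp_apply, Submodule.subtype_apply,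
      LinearMap.toSpanSingleton_apply, map_smul, Algebra.smul_def, Ideal.Quotient.algebraMap_eq,
      Ideal.Quotient.eq_zero_iff_mem.2 r.2, zero_mul]
  have : IsSimpleModule R (R ⧸ maximalIdeal R) :=
    isSimpleModule_iff_isCoatom.2 (maximalIdeal.isMaximal R).out
  refine (maximalIdeal R).eq_bot_or_isAtom_of_injective (.codRestrictOfInjective φ f hf hmem) ?_
  exact .of_comp (f := f) (by rwa [← LinearMap.coe_comp, LinearMap.codRestrictOfInjective_comp])

theorem exists_span_singleton_eq_maximalIdeal
    (h : ∀ I : Ideal R, I ≠ ⊥ → I ≠ ⊤ → I = maximalIdeal R) (hm : maximalIdeal R ≠ ⊥) :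
    ∃ x : R, Ideal.span {x} = maximalIdeal R ∧ ∀ r, r * x = 0 ↔ r ∈ Ideal.span {x} := by
  have hspan : ∀ {y}, y ∈ maximalIdeal R → y ≠ 0 → Ideal.span {y} = maximalIdeal R :=
    fun hy hy0 => h _ (by simpa [Ideal.span_singleton_eq_bot] using hy0) fun htop =>
      (mem_maximalIdeal _).1 hy (Ideal.span_singleton_eq_top.1 htop)
  obtain ⟨x, hxm, hx0⟩ := Submodule.exists_mem_ne_zero_of_ne_bot hm
  have hann : ∀ r, r * x = 0 → r ∈ maximalIdeal R := fun r hr => by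
    by_contra hrm
    exact hx0 ((IsUnit.mul_right_eq_zero (not_not.1 (hrm ∘ (mem_maximalIdeal r).2))).1 hr)
  -- Otherwise `(x * x) = 𝔪 ∋ x`, say `x = a * x * x`, and `1 - a * x ∉ 𝔪` would kill `x`.
  have hxx : x * x = 0 := by
    by_contra hxx
    have : x ∈ Ideal.span {x * x} := (hspan (Ideal.mul_mem_left _ x hxm) hxx).symm ▸ hxm
    obtain ⟨a, ha⟩ := Ideal.mem_span_singleton'.1 this
    have h1 : (1 - a * x) * x = 0 := by rw [sub_mul, one_mul, mul_assoc, ha, sub_self]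
    exact (maximalIdeal.isMaximal R).ne_top <| (Ideal.eq_top_iff_one _).2 <| by
      simpa using add_mem (hann _ h1) (Ideal.mul_mem_left _ a hxm)
  refine ⟨x, hspan hxm hx0, fun r => ⟨fun hr => hspan hxm hx0 ▸ hann r hr, fun hr => ?_⟩⟩
  obtain ⟨c, rfl⟩ := Ideal.mem_span_singleton'.1 hr
  rw [mul_assoc, hxx, mul_zero]

end IsLocalRing

open IsLocalRing in
/-- A local commutative ring is SG-semisimple iff it has at most one nonzero proper ideal. -/
theorem local_sgSemisimple_iff_at_most_one_ideal (R : Type u) [CommRing R] [IsLocalRing R] :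
    SGSemisimple R ↔
      ∀ I J : Ideal R, I ≠ ⊥ → I ≠ ⊤ → J ≠ ⊥ → J ≠ ⊤ → I = J := by
  constructor
  · intro hSG I J hI hI' hJ hJ'
    rcases maximalIdeal_eq_bot_or_isAtom (hSG (.of R (R ⧸ maximalIdeal R))).1 with hm | hm
    · exact absurd (eq_bot_iff.2 (hm ▸ le_maximalIdeal hI')) hI
    · rw [(hm.le_iff.1 (le_maximalIdeal hI')).resolve_left hI,
        (hm.le_iff.1 (le_maximalIdeal hJ')).resolve_left hJ]
  · intro h
    have hI : ∀ I : Ideal R, I ≠ ⊥ → I ≠ ⊤ → I = maximalIdeal R := fun I hbot htop =>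
      h I _ hbot htop (ne_bot_of_le_ne_bot hbot (le_maximalIdeal htop))
        (maximalIdeal.isMaximal R).ne_top
    by_cases hm : maximalIdeal R = ⊥
    · exact sgSemisimple_of_isField (isField_iff_maximalIdeal_eq.2 hm)
    obtain ⟨x, hspan, hx⟩ := exists_span_singleton_eq_maximalIdeal hI hm
    have : (Ideal.span {x}).IsMaximal := hspan ▸ maximalIdeal.isMaximal R
    refine fun M => ⟨HasProjectiveSelfExtension.of_mul_eq_zero_iff_mem_span hx M, fun Q _ => ?_⟩
    have := Module.Flat.injective_of_forall_ideal_eq_span_singleton hx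
      (fun I hbot htop => (hI I hbot htop).trans hspan.symm) Q
    exact extVanishes_succ_of_injective 0 M Q
end

section
/- Let R be a local commutative ring with maximal ideal m such that m is the unique nonzero proper ideal of R (in particular R is not a field). Then m is principal, m² = 0, and m is a strongly Gorenstein projective R-module. -/
open CategoryTheory

universe u

/-!
Any nonzero `x ∈ m` generates `m`, and Nakayama's lemma rules out `m² = m`, so `m² = 0`.
Hence the annihilator of `x` is `m = xR`: the sequence `R --x--> R --x--> R` is exact, and so is
`0 → xR → R → xR → 0` with second map `r ↦ r x`. Splicing copies of the latter gives the periodic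
free resolution `⋯ → R --x--> R --x--> R → xR`, so `Ext¹(xR, N)` is the homology of
`N --x--> N --x--> N`. This vanishes for every flat `N`, since tensoring with `N` preserves the
exactness of `R --x--> R --x--> R`.
-/

open Limits IsLocalRing

section PeriodicResolution

variable {R : Type u} [CommRing R] {x : R}

noncomputable def smulComplex (hxx : x * x = 0) : ChainComplex (ModuleCat.{u} R) ℕ :=
  ChainComplex.of (fun _ => ModuleCat.of R R) (fun _ => ModuleCat.ofHom (LinearMap.mulLeft R x))
    fun _ => by ext; simp [hxx]

lemma smulComplex_d (hxx : x * x = 0) (n : ℕ) (r : R) :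
    (smulComplex hxx).d (n + 1) n r = x * r := by
  simp only [smulComplex, ChainComplex.of_d]
  rfl

lemma mul_self_eq_zero_of_exact_smul (hx : Function.Exact (x • · : R → R) (x • ·)) :
    x * x = 0 := by
  simpa using hx.apply_apply_eq_zero 1

variable {M : Type u} [AddCommGroup M] [Module R M]

noncomputable def periodicResolution (hx : Function.Exact (x • · : R → R) (x • ·))
    (g : R →ₗ[R] M) (hg : Function.Surjective g) (hxg : Function.Exact (x • · : R → R) g) :
    ProjectiveResolution (ModuleCat.of R M) where
  complex := smulComplex (mul_self_eq_zero_of_exact_smul hx)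
  projective _ := (IsProjective.iff_projective _).1 (inferInstanceAs (Module.Projective R R))
  π := (ChainComplex.toSingle₀Equiv _ _).symm ⟨ModuleCat.ofHom g, by
    ext
    exact hxg.apply_apply_eq_zero 1⟩
  quasiIso := ⟨fun n => by
    cases n with
    | zero =>
      rw [ChainComplex.quasiIsoAt₀_iff, ShortComplex.quasiIso_iff_of_zeros' _ rfl rfl rfl]
      refine ⟨?_, (ModuleCat.epi_iff_surjective _).2 hg⟩
      rw [ShortComplex.moduleCat_exact_iff]
      intro r hr
      obtain ⟨a, rfl⟩ := (hxg r).1 hr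
      exact ⟨a, smulComplex_d (mul_self_eq_zero_of_exact_smul hx) 0 a⟩
    | succ n =>
      rw [quasiIsoAt_iff_exactAt' _ _ (ChainComplex.exactAt_succ_single_obj _ _),
        HomologicalComplex.exactAt_iff' _ (n + 2) (n + 1) n (by simp) (by simp),
        ShortComplex.moduleCat_exact_iff]
      intro (r : R) hr
      have hxx := mul_self_eq_zero_of_exact_smul hx
      obtain ⟨a, rfl⟩ := (hx r).1 ((smulComplex_d hxx n r).symm.trans hr)
      exact ⟨a, smulComplex_d hxx (n + 1) a⟩⟩

theorem extVanishes_one_of_exact_smul {N : Type u} [AddCommGroup N] [Module R N]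
    (hx : Function.Exact (x • · : R → R) (x • ·))
    (g : R →ₗ[R] M) (hg : Function.Surjective g) (hxg : Function.Exact (x • · : R → R) g)
    (hN : Function.Exact (x • · : N → N) (x • ·)) : extVanishes R 1 M N := by
  have hxx := mul_self_eq_zero_of_exact_smul hx
  let P := periodicResolution hx g hg hxg
  refine ModuleCat.subsingleton_of_isZero (IsZero.of_iso ?_ (P.isoExt 1 (ModuleCat.of R N)))
  rw [← HomologicalComplex.exactAt_iff_isZero_homology,
    HomologicalComplex.exactAt_iff' _ 0 1 2 (by simp) (by simp), ShortComplex.moduleCat_exact_iff]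
  intro (φ : ModuleCat.of R R ⟶ ModuleCat.of R N) hφ
  have hφx : x • φ (1 : R) = 0 := by
    have h : (smulComplex hxx).d 2 1 ≫ φ = 0 := hφ
    rw [← map_smul, smul_eq_mul, ← smulComplex_d hxx 1]
    exact congrArg (fun ψ : ModuleCat.of R R ⟶ ModuleCat.of R N => ψ (1 : R)) h
  obtain ⟨n, hn⟩ := (hN _).1 hφx
  refine ⟨ModuleCat.ofHom (LinearMap.toSpanSingleton R N n), ?_⟩
  change (smulComplex hxx).d 1 0 ≫ ModuleCat.ofHom (LinearMap.toSpanSingleton R N n) = φ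
  ext
  change LinearMap.toSpanSingleton R N n ((smulComplex hxx).d 1 0 (1 : R)) = φ (1 : R)
  rw [smulComplex_d hxx 0, mul_one, LinearMap.toSpanSingleton_apply]
  exact hn

end PeriodicResolution

section

variable {R : Type u} [CommRing R] {x : R}

theorem exact_smul_of_flat (N : Type*) [AddCommGroup N] [Module R N] [Module.Flat R N]
    (hx : Function.Exact (x • · : R → R) (x • ·)) :
    Function.Exact (x • · : N → N) (x • ·) := by
  have hN := Module.Flat.lTensor_exact N
    (f := LinearMap.lsmul R R x) (g := LinearMap.lsmul R R x) hx
  have hcomm : LinearMap.lsmul R N x ∘ₗ (TensorProduct.rid R N).toLinearMap =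
      (TensorProduct.rid R N).toLinearMap ∘ₗ (LinearMap.lsmul R R x).lTensor N := by
    ext n
    simp
  exact Function.Exact.of_ladder_linearEquiv_of_exact hcomm hcomm hN

theorem isStronglyGorensteinProjective_span_singleton
    (hx : Function.Exact (x • · : R → R) (x • ·)) :
    IsStronglyGorensteinProjective R (Ideal.span {x}) := by
  let g : R →ₗ[R] Ideal.span {x} :=
    LinearMap.toSpanSingleton R _ ⟨x, Ideal.mem_span_singleton_self x⟩
  have hg : Function.Surjective g := by
    rintro ⟨y, hy⟩
    obtain ⟨a, rfl⟩ := Ideal.mem_span_singleton'.1 hy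
    exact ⟨a, rfl⟩
  have hxg : Function.Exact (x • · : R → R) g := by
    intro r
    rw [← hx r, Subtype.ext_iff]
    simp [g, mul_comm]
  refine ⟨⟨ModuleCat.of R R, (Ideal.span {x}).subtype, g, inferInstanceAs (Module.Projective R R),
    Subtype.val_injective, hg, ?_⟩, fun Q _ => extVanishes_one_of_exact_smul hx g hg hxg
    (exact_smul_of_flat Q hx)⟩
  ext r
  rw [Submodule.range_subtype, LinearMap.mem_ker, hxg r, Ideal.mem_span_singleton']
  simp [mul_comm]

end

namespace IsLocalRing

variable {R : Type u} [CommRing R] [IsLocalRing R]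

theorem maximalIdeal_sq_ne_self_of_fg (hfg : (maximalIdeal R).FG) (hm : maximalIdeal R ≠ ⊥) :
    maximalIdeal R ^ 2 ≠ maximalIdeal R := fun h =>
  hm <| Submodule.eq_bot_of_le_smul_of_le_jacobson_bot _ _ hfg
    (by rw [smul_eq_mul, ← sq, h]) (maximalIdeal_le_jacobson ⊥)

theorem exact_smul_of_maximalIdeal_eq_span {x : R} (hspan : maximalIdeal R = Ideal.span {x})
    (hx0 : x ≠ 0) (hsq : maximalIdeal R ^ 2 = ⊥) : Function.Exact (x • · : R → R) (x • ·) := by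
  have hxm : x ∈ maximalIdeal R := hspan ▸ Ideal.mem_span_singleton_self x
  have hxx : x * x = 0 := by simpa [← sq, hsq] using Ideal.pow_mem_pow hxm 2
  intro r
  constructor
  · intro hr
    have hrm : r ∈ maximalIdeal R := fun hu => hx0 (hu.mul_left_eq_zero.1 hr)
    obtain ⟨a, rfl⟩ := Ideal.mem_span_singleton'.1 (hspan ▸ hrm)
    exact ⟨a, by simp [mul_comm]⟩
  · rintro ⟨a, rfl⟩
    simp [← mul_assoc, hxx]

end IsLocalRing

/-- If the maximal ideal `m` of a local commutative ring `R` is its unique nonzero proper ideal,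
then `m` is principal, `m² = 0`, and `m` is a strongly Gorenstein projective `R`-module. -/
theorem maximalIdeal_sgProjective_of_unique_ideal (R : Type u) [CommRing R] [IsLocalRing R]
    (hm : IsLocalRing.maximalIdeal R ≠ ⊥)
    (huniq : ∀ I : Ideal R, I ≠ ⊥ → I ≠ ⊤ → I = IsLocalRing.maximalIdeal R) :
    (∃ x : R, IsLocalRing.maximalIdeal R = Ideal.span {x}) ∧
    IsLocalRing.maximalIdeal R ^ 2 = ⊥ ∧
    IsStronglyGorensteinProjective R (IsLocalRing.maximalIdeal R) := by
  obtain ⟨x, hxm, hx0⟩ := (Submodule.ne_bot_iff _).1 hm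
  have hspan : maximalIdeal R = Ideal.span {x} :=
    (huniq _ (by simpa using hx0) (Ideal.span_singleton_ne_top hxm)).symm
  have hsq : maximalIdeal R ^ 2 = ⊥ := by
    by_contra hne
    refine maximalIdeal_sq_ne_self_of_fg ⟨{x}, by simp [hspan]⟩ hm (huniq _ hne ?_)
    exact ne_top_of_le_ne_top (maximalIdeal.isMaximal R).ne_top (Ideal.pow_le_self two_ne_zero)
  refine ⟨⟨x, hspan⟩, hsq, ?_⟩
  rw [hspan]
  exact isStronglyGorensteinProjective_span_singleton
    (exact_smul_of_maximalIdeal_eq_span hspan hx0 hsq)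
end
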